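/- Let W be a graphon such that (J, r_W) has finite packing dimension d. Then for every 0 < ε < 1 there is a measurable partition P of J into at most ε^{−O(ε^{−d})} classes such that ‖W − W_P‖₁ ≤ ε (an ultra-strong regularity partition with error ε). -/

import Mathlib

/-!
Cover `J` by the `r_W`-balls of radius `ε/4` around a maximal `ε/4`-separated set, which by the
packing bound has at most `Cp (ε/4)^{-d}` points, and put each point into the first ball that
contains it. Points in one class are at `r_W`-distance `< ε/2`. Averaging `W` over the class of the
first variable costs at most the mean `r_W`-distance within classes; so does averaging over the
class of the second variable, because `W` is symmetric. Hence `‖W - W_P‖₁ ≤ ε`. For `ε ≥ 1/2` the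
one-class partition works, since `‖W - a‖₁ ≤ 2a(1-a) ≤ 1/2` for `a = ∫ W`.
-/

open MeasureTheory Set Function

section Averages

variable {α β ι : Type*} [MeasurableSpace α] [MeasurableSpace β] {μ : Measure α}

lemma integrable_of_abs_le [IsFiniteMeasure μ] {f : α → ℝ} (hf : Measurable f) {C : ℝ}
    (hC : ∀ a, |f a| ≤ C) : Integrable f μ :=
  .of_bound hf.aestronglyMeasurable C (ae_of_all _ hC)

lemma Measurable.integral_right {ν : Measure β} [SFinite ν] {F : α → β → ℝ}
    (hF : Measurable (uncurry F)) : Measurable fun a => ∫ b, F a b ∂ν :=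
  hF.stronglyMeasurable.integral_prod_right.measurable

lemma Measurable.setAverage_right [SFinite μ] (s : Set α) {F : β → α → ℝ}
    (hF : Measurable (uncurry F)) : Measurable fun b => ⨍ a in s, F b a ∂μ := by
  simp only [setAverage_eq, smul_eq_mul]
  exact (hF.integral_right (ν := μ.restrict s)).const_mul _

lemma Measurable.setAverage_comp [SFinite μ] [Countable ι] [MeasurableSpace ι]
    [MeasurableSingletonClass ι] (t : ι → Set α) {c : β → ι} (hc : Measurable c)
    {F : β → α → ℝ} (hF : Measurable (uncurry F)) :
    Measurable fun b => ⨍ a in t (c b), F b a ∂μ := by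
  have h : Measurable fun p : β × ι => ⨍ a in t p.2, F p.1 a ∂μ :=
    measurable_from_prod_countable_left fun i => hF.setAverage_right (t i)
  exact h.comp (f := fun b => (b, c b)) (measurable_id.prodMk hc)

lemma abs_setAverage_le [IsFiniteMeasure μ] {f : α → ℝ} {C : ℝ} (hC₀ : 0 ≤ C)
    (hC : ∀ a, |f a| ≤ C) (s : Set α) : |⨍ a in s, f a ∂μ| ≤ C := by
  rw [setAverage_eq, smul_eq_mul, abs_mul, abs_inv, abs_of_nonneg measureReal_nonneg]
  calc (μ.real s)⁻¹ * |∫ a in s, f a ∂μ| ≤ (μ.real s)⁻¹ * (C * μ.real s) := by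
        gcongr
        simpa [mul_comm] using norm_setIntegral_le_of_norm_le_const (measure_lt_top μ s)
          fun a _ => (Real.norm_eq_abs _).trans_le (hC a)
    _ ≤ C := by
        rcases eq_or_ne (μ.real s) 0 with h | h
        · simp [h, hC₀]
        · rw [mul_comm C, ← mul_assoc, inv_mul_cancel₀ h, one_mul]

lemma setAverage_nonneg {s : Set α} {f : α → ℝ} (hf : ∀ a, 0 ≤ f a) :
    0 ≤ ⨍ a in s, f a ∂μ := by
  rw [setAverage_eq, smul_eq_mul]
  exact mul_nonneg (inv_nonneg.2 measureReal_nonneg) (integral_nonneg hf)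

lemma setAverage_mono {s : Set α} (hs : MeasurableSet s) {f g : α → ℝ}
    (hf : IntegrableOn f s μ) (hg : IntegrableOn g s μ) (hfg : ∀ a ∈ s, f a ≤ g a) :
    ⨍ a in s, f a ∂μ ≤ ⨍ a in s, g a ∂μ := by
  simp only [setAverage_eq, smul_eq_mul]
  exact mul_le_mul_of_nonneg_left (setIntegral_mono_on hf hg hs hfg)
    (inv_nonneg.2 measureReal_nonneg)

lemma setAverage_add {s : Set α} {f g : α → ℝ} (hf : IntegrableOn f s μ)
    (hg : IntegrableOn g s μ) :
    ⨍ a in s, (f a + g a) ∂μ = ⨍ a in s, f a ∂μ + ⨍ a in s, g a ∂μ := by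
  simp_rw [setAverage_eq, integral_add hf hg, smul_add]

lemma abs_sub_setAverage_le {s : Set α} (hs₀ : μ s ≠ 0) (hs : μ s ≠ ⊤) {f : α → ℝ}
    (hf : IntegrableOn f s μ) (c : ℝ) :
    |c - ⨍ a in s, f a ∂μ| ≤ ⨍ a in s, |c - f a| ∂μ := by
  have hc : c - ⨍ a in s, f a ∂μ = ⨍ a in s, (c - f a) ∂μ := by
    simp_rw [setAverage_eq, integral_sub (integrableOn_const hs : IntegrableOn (fun _ => c) s μ) hf,
      smul_sub, ← setAverage_eq, setAverage_const hs₀ hs]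
  rw [hc, setAverage_eq, setAverage_eq, smul_eq_mul, smul_eq_mul, abs_mul,
    abs_of_nonneg (inv_nonneg.2 measureReal_nonneg)]
  gcongr
  exact abs_integral_le_integral_abs

lemma integral_setAverage_comm {ν : Measure β} [SFinite μ] [SFinite ν] {s : Set α}
    {F : α → β → ℝ} (hF : Integrable (uncurry F) ((μ.restrict s).prod ν)) :
    ∫ b, ⨍ a in s, F a b ∂μ ∂ν = ⨍ a in s, ∫ b, F a b ∂ν ∂μ := by
  simp_rw [setAverage_eq, integral_smul, integral_integral_swap hF]

lemma integral_integral_mono_ae {ν : Measure β} [SFinite μ] [SFinite ν] {F G : α → β → ℝ}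
    (hF : Integrable (uncurry F) (μ.prod ν)) (hG : Integrable (uncurry G) (μ.prod ν))
    (hFG : ∀ᵐ x ∂μ, ∀ᵐ y ∂ν, F x y ≤ G x y) :
    ∫ x, ∫ y, F x y ∂ν ∂μ ≤ ∫ x, ∫ y, G x y ∂ν ∂μ := by
  refine integral_mono_ae hF.integral_prod_left hG.integral_prod_left ?_
  filter_upwards [hFG, hF.prod_right_ae, hG.prod_right_ae] with x hx hFx hGx
  exact integral_mono_ae hFx hGx hx

lemma integral_abs_sub_integral_le_half [IsProbabilityMeasure μ] {f : α → ℝ}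
    (hf : Integrable f μ) (h₀ : ∀ a, 0 ≤ f a) (h₁ : ∀ a, f a ≤ 1) :
    ∫ a, |f a - ∫ b, f b ∂μ| ∂μ ≤ 1 / 2 := by
  set c := ∫ b, f b ∂μ
  have hc₀ : 0 ≤ c := integral_nonneg h₀
  have hc₁ : c ≤ 1 := by simpa using integral_mono hf (integrable_const 1) h₁
  have hpt : ∀ a, |f a - c| ≤ c + (1 - 2 * c) * f a := fun a => by
    rcases le_total c (f a) with h | h
    · rw [abs_of_nonneg (sub_nonneg.2 h)]
      nlinarith [h₁ a]
    · rw [abs_of_nonpos (sub_nonpos.2 h)]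
      nlinarith [h₀ a]
  calc ∫ a, |f a - c| ∂μ ≤ ∫ a, (c + (1 - 2 * c) * f a) ∂μ :=
        integral_mono (hf.sub (integrable_const c)).abs
          ((integrable_const c).add (hf.const_mul _)) hpt
    _ = c + (1 - 2 * c) * c := by
        rw [integral_add (integrable_const c) (hf.const_mul _), integral_const, integral_const_mul]
        simp [c]
    _ ≤ 1 / 2 := by nlinarith [sq_nonneg (2 * c - 1)]

end Averages

section Fibers

variable {α ι : Type*} [MeasurableSpace α] {μ : Measure α} {κ : α → ι}

lemma ae_measure_fiber_ne_zero [Countable ι] : ∀ᵐ x ∂μ, μ (κ ⁻¹' {κ x}) ≠ 0 := by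
  have : {x | μ (κ ⁻¹' {κ x}) = 0} = ⋃ i ∈ {i | μ (κ ⁻¹' {i}) = 0}, κ ⁻¹' {i} := by
    ext x
    simp
  rw [ae_iff]
  simp only [not_not, this]
  exact (measure_biUnion_null_iff (to_countable _)).2 fun i hi => hi

lemma exists_measurable_forall_mem {m : ℕ} {S : Fin m → Set α} (hS : ∀ i, MeasurableSet (S i))
    (hcov : ∀ x, ∃ i, x ∈ S i) : ∃ κ : α → Fin m, Measurable κ ∧ ∀ x, x ∈ S (κ x) := by
  classical
  let p : α → ℕ → Prop := fun x n => ∃ h : n < m, x ∈ S ⟨n, h⟩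
  have hp : ∀ x, ∃ n, p x n := fun x =>
    let ⟨i, hi⟩ := hcov x
    ⟨i, i.2, hi⟩
  have hpm : ∀ n, MeasurableSet {x | p x n} := fun n => by
    by_cases h : n < m
    · simpa [p, h] using hS ⟨n, h⟩
    · simp [p, h]
  refine ⟨fun x => ⟨Nat.find (hp x), (Nat.find_spec (hp x)).1⟩,
    measurable_to_countable' fun i => ?_, fun x => (Nat.find_spec (hp x)).2⟩
  have : (fun x => (⟨Nat.find (hp x), (Nat.find_spec (hp x)).1⟩ : Fin m)) ⁻¹' {i} =
      (fun x => Nat.find (hp x)) ⁻¹' {(i : ℕ)} := by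
    ext x
    simp [Fin.ext_iff]
  rw [this]
  exact measurable_find hp hpm (measurableSet_singleton _)

lemma integral_setAverage_fiber_le [IsProbabilityMeasure μ] [Countable ι] [MeasurableSpace ι]
    [MeasurableSingletonClass ι] (hκ : Measurable κ) {f : α → α → ℝ} (hf₀ : ∀ x u, 0 ≤ f x u)
    (hf : ∀ x, Integrable (f x) μ) {η : ℝ} (hη : ∀ x u, κ x = κ u → f x u ≤ η) :
    ∫ x, ⨍ u in κ ⁻¹' {κ x}, f x u ∂μ ∂μ ≤ η := by
  have hle : ∀ᵐ x ∂μ, ⨍ u in κ ⁻¹' {κ x}, f x u ∂μ ≤ η := by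
    filter_upwards [ae_measure_fiber_ne_zero (κ := κ)] with x hx
    calc ⨍ u in κ ⁻¹' {κ x}, f x u ∂μ ≤ ⨍ _ in κ ⁻¹' {κ x}, η ∂μ :=
          setAverage_mono (hκ (measurableSet_singleton _)) (hf x).integrableOn
            (integrableOn_const (measure_ne_top μ _)) fun u hu => hη x u (mem_preimage.1 hu).symm
      _ = η := setAverage_const hx (measure_ne_top μ _) η
  calc ∫ x, ⨍ u in κ ⁻¹' {κ x}, f x u ∂μ ∂μ ≤ ∫ _, η ∂μ :=
        integral_mono_of_nonneg (ae_of_all _ fun x => setAverage_nonneg (hf₀ x))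
          (integrable_const η) hle
    _ = η := by simp

variable [Fintype ι] [MeasurableSpace ι] [MeasurableSingletonClass ι]

lemma integral_eq_sum_setIntegral_fiber (hκ : Measurable κ) {f : α → ℝ} (hf : Integrable f μ) :
    ∫ x, f x ∂μ = ∑ i, ∫ x in κ ⁻¹' {i}, f x ∂μ := by
  rw [← integral_iUnion_fintype (fun i => hκ (measurableSet_singleton i))
    (fun i j hij => (disjoint_singleton.2 hij).preimage κ) fun i => hf.integrableOn]
  simp only [← preimage_iUnion, iUnion_of_singleton, preimage_univ, Measure.restrict_univ]

lemma integral_setAverage_fiber [IsFiniteMeasure μ] (hκ : Measurable κ) {f : α → ℝ}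
    (hf : Integrable f μ) : ∫ x, ⨍ a in κ ⁻¹' {κ x}, f a ∂μ ∂μ = ∫ a, f a ∂μ := by
  set g : ι → ℝ := fun i => ⨍ a in κ ⁻¹' {i}, f a ∂μ
  have hg : Integrable (fun x => g (κ x)) μ :=
    integrable_of_abs_le ((measurable_of_countable g).comp hκ) fun x =>
      Finset.single_le_sum (f := fun i => |g i|) (fun i _ => abs_nonneg _) (Finset.mem_univ (κ x))
  rw [integral_eq_sum_setIntegral_fiber hκ hf, integral_eq_sum_setIntegral_fiber hκ hg]
  refine Finset.sum_congr rfl fun i _ => ?_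
  rw [setIntegral_congr_fun (hκ (measurableSet_singleton i)) (g := fun _ => g i)
      fun x hx => by rw [mem_preimage.1 hx],
    setIntegral_const, measure_smul_setAverage _ (measure_ne_top μ _)]

end Fibers

theorem exists_finset_cover_of_separated_card_le {α : Type*} {r : α → α → ℝ}
    (hr : ∀ x y, r x y = r y x) {δ : ℝ} (hδ : ∀ x, r x x < δ) {N : ℝ}
    (hN : ∀ Z : Finset α, (Z : Set α).Pairwise (fun x y => δ ≤ r x y) → (Z.card : ℝ) ≤ N) :
    ∃ Z : Finset α, (Z.card : ℝ) ≤ N ∧ ∀ x, ∃ z ∈ Z, r x z < δ := by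
  classical
  by_contra! H
  have hsep : ∀ n : ℕ, ∃ Z : Finset α,
      (Z : Set α).Pairwise (fun x y => δ ≤ r x y) ∧ Z.card = n := by
    intro n
    induction n with
    | zero => exact ⟨∅, by simp, rfl⟩
    | succ n ih =>
      obtain ⟨Z, hZ, rfl⟩ := ih
      obtain ⟨x, hx⟩ := H Z (hN Z hZ)
      have hxZ : x ∉ Z := fun h => (hδ x).not_ge (hx x h)
      refine ⟨insert x Z, ?_, Finset.card_insert_of_notMem hxZ⟩
      rw [Finset.coe_insert, Set.pairwise_insert]
      exact ⟨hZ, fun z hz _ => ⟨hx z hz, hr x z ▸ hx z hz⟩⟩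
  obtain ⟨Z, hZ, hcard⟩ := hsep (⌊N⌋₊ + 1)
  have hZN := hN Z hZ
  rw [hcard, Nat.cast_add_one] at hZN
  linarith [Nat.lt_floor_add_one N]

theorem exists_pos_rpow_bound (K : ℝ) {d : ℝ} (hd : 0 < d) :
    ∃ c : ℝ, 0 < c ∧ ∀ ε : ℝ, 0 < ε → ε < 1 / 2 → K * ε ^ (-d) ≤ ε ^ (-(c * ε ^ (-d))) := by
  obtain ⟨N, hN⟩ := pow_unbounded_of_one_lt K one_lt_two
  refine ⟨N + d, by positivity, fun ε hε₀ hε => ?_⟩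
  have hεd : 1 ≤ ε ^ (-d) :=
    Real.one_le_rpow_of_pos_of_le_one_of_nonpos hε₀ (by linarith) (by linarith)
  have h2 : (2 : ℝ) ^ N ≤ ε ^ (-(N : ℝ)) := by
    rw [Real.rpow_neg hε₀.le, Real.rpow_natCast, ← inv_pow]
    exact pow_le_pow_left₀ zero_le_two ((le_inv_comm₀ two_pos hε₀).2 (by linarith)) N
  calc K * ε ^ (-d) ≤ ε ^ (-(N : ℝ)) * ε ^ (-d) := by gcongr; exact hN.le.trans h2
    _ = ε ^ (-(N + d)) := by rw [← Real.rpow_add hε₀]; ring_nf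
    _ ≤ ε ^ (-((N + d) * ε ^ (-d))) :=
        Real.rpow_le_rpow_of_exponent_ge hε₀ (by linarith) (by nlinarith)

/-- The distance `r_W` of the paper. -/
noncomputable def neighborhoodDist {J : Type*} [MeasurableSpace J] (μ : Measure J)
    (W : J → J → ℝ) (x y : J) : ℝ :=
  ∫ z, |W x z - W y z| ∂μ

/-- `W_P` for the partition into the fibers of `κ`. On a null class it is `0`, as is the quotient
in the paper's formula, whose denominator vanishes there. -/
noncomputable def stepAverage {J ι : Type*} [MeasurableSpace J] (μ : Measure J) (κ : J → ι)
    (W : J → J → ℝ) (x y : J) : ℝ :=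
  ⨍ u in κ ⁻¹' {κ x}, ⨍ v in κ ⁻¹' {κ y}, W u v ∂μ ∂μ

lemma abs_sub_le_two {J : Type*} {W : J → J → ℝ} (hWb : ∀ x y, |W x y| ≤ 1) (x y u v : J) :
    |W x y - W u v| ≤ 2 :=
  (abs_sub _ _).trans (by linarith [hWb x y, hWb u v])

section Kernel

variable {J ι : Type*} [MeasurableSpace J] {μ : Measure J} {W : J → J → ℝ}

lemma neighborhoodDist_comm (x y : J) : neighborhoodDist μ W x y = neighborhoodDist μ W y x := by
  simp only [neighborhoodDist, abs_sub_comm]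

lemma neighborhoodDist_self (x : J) : neighborhoodDist μ W x x = 0 := by
  simp [neighborhoodDist]

lemma stepAverage_eq_of_mem {κ : J → ι} {i j : ι} {x y : J} (hx : x ∈ κ ⁻¹' {i})
    (hy : y ∈ κ ⁻¹' {j}) :
    stepAverage μ κ W x y = (∫ u in κ ⁻¹' {i}, ∫ v in κ ⁻¹' {j}, W u v ∂μ ∂μ) /
      ((μ (κ ⁻¹' {i})).toReal * (μ (κ ⁻¹' {j})).toReal) := by
  rw [stepAverage, mem_preimage.1 hx, mem_preimage.1 hy]
  simp only [setAverage_eq, smul_eq_mul, integral_const_mul, measureReal_def]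
  ring

lemma stepAverage_const [IsProbabilityMeasure μ] (i : ι) (x y : J) :
    stepAverage μ (fun _ => i) W x y = ∫ u, ∫ v, W u v ∂μ ∂μ := by
  simp [stepAverage, average_eq_integral]

lemma abs_stepAverage_le [IsFiniteMeasure μ] (hWb : ∀ x y, |W x y| ≤ 1) (κ : J → ι) (x y : J) :
    |stepAverage μ κ W x y| ≤ 1 :=
  abs_setAverage_le zero_le_one (fun u => abs_setAverage_le zero_le_one (hWb u) _) _

lemma measurable_neighborhoodDist [SFinite μ] (hW : Measurable (uncurry W)) :
    Measurable (uncurry (neighborhoodDist μ W)) :=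
  Measurable.integral_right (F := fun (p : J × J) z => |W p.1 z - W p.2 z|) (by fun_prop)

lemma measurable_stepAverage [SFinite μ] [Countable ι] [MeasurableSpace ι]
    [MeasurableSingletonClass ι] (hW : Measurable (uncurry W)) {κ : J → ι} (hκ : Measurable κ) :
    Measurable (uncurry (stepAverage μ κ W)) :=
  Measurable.setAverage_comp (fun i => κ ⁻¹' {i}) (hκ.comp measurable_fst)
    (Measurable.setAverage_comp (fun i => κ ⁻¹' {i}) (hκ.comp (measurable_snd.comp measurable_fst))
      (F := fun (q : (J × J) × J) v => W q.2 v) (by fun_prop))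

lemma integral_integral_abs_sub_stepAverage_const_le_half [IsProbabilityMeasure μ]
    (hW : Measurable (uncurry W)) (hW₀ : ∀ x y, 0 ≤ W x y) (hW₁ : ∀ x y, W x y ≤ 1) (i : ι) :
    ∫ x, ∫ y, |W x y - stepAverage μ (fun _ => i) W x y| ∂μ ∂μ ≤ 1 / 2 := by
  have hWb : ∀ x y, |W x y| ≤ 1 := fun x y => abs_le.2 ⟨by linarith [hW₀ x y], hW₁ x y⟩
  have hWi : Integrable (uncurry W) (μ.prod μ) := integrable_of_abs_le hW fun p => hWb p.1 p.2
  set a := ∫ p, uncurry W p ∂μ.prod μ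
  have ha : ∫ u, ∫ v, W u v ∂μ ∂μ = a := (integral_prod _ hWi).symm
  simp only [stepAverage_const, ha]
  calc ∫ x, ∫ y, |W x y - a| ∂μ ∂μ = ∫ p, |uncurry W p - a| ∂μ.prod μ :=
        (integral_prod (fun p => |uncurry W p - a|) (hWi.sub (integrable_const a)).abs).symm
    _ ≤ 1 / 2 :=
        integral_abs_sub_integral_le_half hWi (fun p => hW₀ p.1 p.2) fun p => hW₁ p.1 p.2

section Finite

variable [IsFiniteMeasure μ]

lemma neighborhoodDist_triangle (hW : Measurable (uncurry W)) (hWb : ∀ x y, |W x y| ≤ 1)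
    (x y w : J) :
    neighborhoodDist μ W x y ≤ neighborhoodDist μ W x w + neighborhoodDist μ W w y := by
  have hint : ∀ a b, Integrable (fun z => |W a z - W b z|) μ := fun a b =>
    integrable_of_abs_le (by fun_prop) fun z => (abs_abs _).trans_le (abs_sub_le_two hWb a z b z)
  unfold neighborhoodDist
  rw [← integral_add (hint x w) (hint w y)]
  exact integral_mono (hint x y) ((hint x w).add (hint w y)) fun z => abs_sub_le _ _ _

lemma integrable_neighborhoodDist (hW : Measurable (uncurry W)) (hWb : ∀ x y, |W x y| ≤ 1)
    (x : J) : Integrable (neighborhoodDist μ W x) μ :=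
  integrable_of_abs_le ((measurable_neighborhoodDist hW).comp measurable_prodMk_left) fun u => by
    simpa [neighborhoodDist] using norm_integral_le_of_norm_le_const (μ := μ)
      (f := fun z => |W x z - W u z|)
      (ae_of_all _ fun z => (abs_abs _).trans_le (abs_sub_le_two hWb x z u z))

lemma abs_sub_stepAverage_le (hW : Measurable (uncurry W)) (hWb : ∀ x y, |W x y| ≤ 1)
    {κ : J → ι} {x y : J} (hx : μ (κ ⁻¹' {κ x}) ≠ 0) (hy : μ (κ ⁻¹' {κ y}) ≠ 0)
    (hxm : MeasurableSet (κ ⁻¹' {κ x})) :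
    |W x y - stepAverage μ κ W x y| ≤ ⨍ u in κ ⁻¹' {κ x}, |W x y - W u y| ∂μ +
      ⨍ u in κ ⁻¹' {κ x}, ⨍ v in κ ⁻¹' {κ y}, |W u y - W u v| ∂μ ∂μ := by
  have hrow : ∀ {f : J → J → ℝ} {C : ℝ}, Measurable (uncurry f) → 0 ≤ C → (∀ u v, |f u v| ≤ C) →
      IntegrableOn (fun u => ⨍ v in κ ⁻¹' {κ y}, f u v ∂μ) (κ ⁻¹' {κ x}) μ :=
    fun hf hC hfC => integrable_of_abs_le (hf.setAverage_right _)
      fun u => abs_setAverage_le hC (hfC u) _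
  have hcol : IntegrableOn (fun u => |W x y - W u y|) (κ ⁻¹' {κ x}) μ :=
    integrable_of_abs_le (by fun_prop) fun u => (abs_abs _).trans_le (abs_sub_le_two hWb x y u y)
  have hdev : IntegrableOn (fun u => ⨍ v in κ ⁻¹' {κ y}, |W u y - W u v| ∂μ) (κ ⁻¹' {κ x}) μ :=
    hrow (f := fun u v => |W u y - W u v|) (by fun_prop) zero_le_two
      fun u v => (abs_abs _).trans_le (abs_sub_le_two hWb u y u v)
  rw [← setAverage_add hcol hdev]
  refine (abs_sub_setAverage_le hx (measure_ne_top μ _) (hrow hW zero_le_one hWb) _).trans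
    (setAverage_mono hxm ?_ (hcol.add hdev) fun u _ => ?_)
  · refine integrable_of_abs_le (C := 2) (measurable_const.sub (hW.setAverage_right _)).abs
      fun u => ?_
    rw [abs_abs]
    linarith [abs_sub (W x y) (⨍ v in κ ⁻¹' {κ y}, W u v ∂μ), hWb x y,
      abs_setAverage_le (μ := μ) zero_le_one (hWb u) (κ ⁻¹' {κ y})]
  · have hWu : IntegrableOn (W u) (κ ⁻¹' {κ y}) μ := integrable_of_abs_le (by fun_prop) (hWb u)
    calc |W x y - ⨍ v in κ ⁻¹' {κ y}, W u v ∂μ|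
        ≤ |W x y - W u y| + |W u y - ⨍ v in κ ⁻¹' {κ y}, W u v ∂μ| := abs_sub_le _ _ _
      _ ≤ _ := add_le_add le_rfl (abs_sub_setAverage_le hy (measure_ne_top μ _) hWu _)

end Finite

variable [MeasurableSpace ι] [MeasurableSingletonClass ι] {κ : J → ι}

lemma integrable_abs_sub_stepAverage [IsFiniteMeasure μ] [Countable ι]
    (hW : Measurable (uncurry W)) (hWb : ∀ x y, |W x y| ≤ 1)
    (hκ : Measurable κ) :
    Integrable (uncurry fun x y => |W x y - stepAverage μ κ W x y|) (μ.prod μ) := by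
  have hdev : ∀ x y, |W x y - stepAverage μ κ W x y| ≤ 2 := fun x y => by
    linarith [abs_sub (W x y) (stepAverage μ κ W x y), hWb x y,
      abs_stepAverage_le (μ := μ) hWb κ x y]
  exact integrable_of_abs_le (hW.sub (measurable_stepAverage hW hκ)).abs
    fun p => (abs_abs _).trans_le (hdev p.1 p.2)

lemma integrable_setAverage_abs_sub_left [IsFiniteMeasure μ] [Countable ι]
    (hW : Measurable (uncurry W))
    (hWb : ∀ x y, |W x y| ≤ 1) (hκ : Measurable κ) :
    Integrable (uncurry fun x y => ⨍ u in κ ⁻¹' {κ x}, |W x y - W u y| ∂μ) (μ.prod μ) :=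
  integrable_of_abs_le (Measurable.setAverage_comp (fun i => κ ⁻¹' {i}) (hκ.comp measurable_fst)
      (F := fun p u => |W p.1 p.2 - W u p.2|) (by fun_prop))
    fun _ => abs_setAverage_le zero_le_two (fun _ => (abs_abs _).trans_le (abs_sub_le_two hWb ..)) _

lemma integrable_setAverage_setAverage_abs_sub_right [IsFiniteMeasure μ] [Countable ι]
    (hW : Measurable (uncurry W))
    (hWb : ∀ x y, |W x y| ≤ 1) (hκ : Measurable κ) :
    Integrable (uncurry fun x y =>
      ⨍ u in κ ⁻¹' {κ x}, ⨍ v in κ ⁻¹' {κ y}, |W u y - W u v| ∂μ ∂μ) (μ.prod μ) :=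
  integrable_of_abs_le (Measurable.setAverage_comp (fun i => κ ⁻¹' {i}) (hκ.comp measurable_fst)
      (Measurable.setAverage_comp (fun i => κ ⁻¹' {i})
        (hκ.comp (measurable_snd.comp measurable_fst))
        (F := fun q v => |W q.2 q.1.2 - W q.2 v|) (by fun_prop)))
    fun _ => abs_setAverage_le zero_le_two (fun _ => abs_setAverage_le zero_le_two
      (fun _ => (abs_abs _).trans_le (abs_sub_le_two hWb ..)) _) _

variable [IsProbabilityMeasure μ]

lemma integral_integral_setAverage_abs_sub_left_le [Countable ι] (hW : Measurable (uncurry W))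
    (hWb : ∀ x y, |W x y| ≤ 1) (hκ : Measurable κ) {η : ℝ}
    (hη : ∀ x u, κ x = κ u → neighborhoodDist μ W x u ≤ η) :
    ∫ x, ∫ y, ⨍ u in κ ⁻¹' {κ x}, |W x y - W u y| ∂μ ∂μ ∂μ ≤ η := by
  refine le_of_eq_of_le (integral_congr_ae (ae_of_all _ fun x => ?_))
    (integral_setAverage_fiber_le hκ (fun x u => integral_nonneg fun _ => abs_nonneg _)
      (integrable_neighborhoodDist hW hWb) hη)
  exact integral_setAverage_comm
    (integrable_of_abs_le (by fun_prop) fun _ => (abs_abs _).trans_le (abs_sub_le_two hWb ..))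

lemma integral_integral_setAverage_setAverage_abs_sub_right_le [Fintype ι]
    (hW : Measurable (uncurry W)) (hWsymm : ∀ x y, W x y = W y x) (hWb : ∀ x y, |W x y| ≤ 1)
    (hκ : Measurable κ) {η : ℝ} (hη : ∀ x u, κ x = κ u → neighborhoodDist μ W x u ≤ η) :
    ∫ x, ∫ y, ⨍ u in κ ⁻¹' {κ x}, ⨍ v in κ ⁻¹' {κ y}, |W u y - W u v| ∂μ ∂μ ∂μ ∂μ ≤ η := by
  rw [integral_integral_swap (integrable_setAverage_setAverage_abs_sub_right hW hWb hκ)]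
  refine le_of_eq_of_le (integral_congr_ae (ae_of_all _ fun y => ?_))
    (integral_setAverage_fiber_le hκ (fun x u => integral_nonneg fun _ => abs_nonneg _)
      (integrable_neighborhoodDist hW hWb) hη)
  have hdiff : ∀ u v, |(|W u y - W u v|)| ≤ 2 := fun u v =>
    (abs_abs _).trans_le (abs_sub_le_two hWb ..)
  dsimp only
  rw [integral_setAverage_fiber hκ (integrable_of_abs_le (Measurable.setAverage_right _
      (F := fun u v => |W u y - W u v|) (by fun_prop))
      fun u => abs_setAverage_le zero_le_two (hdiff u) _),
    integral_setAverage_comm (integrable_of_abs_le (by fun_prop) fun _ => hdiff ..)]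
  -- by symmetry of `W`, the inner integral is `r_W y v`
  simp only [hWsymm]

theorem integral_integral_abs_sub_stepAverage_le [Fintype ι] (hW : Measurable (uncurry W))
    (hWsymm : ∀ x y, W x y = W y x) (hWb : ∀ x y, |W x y| ≤ 1) (hκ : Measurable κ) {η : ℝ}
    (hη : ∀ x u, κ x = κ u → neighborhoodDist μ W x u ≤ η) :
    ∫ x, ∫ y, |W x y - stepAverage μ κ W x y| ∂μ ∂μ ≤ 2 * η := by
  have hg₁ := integrable_setAverage_abs_sub_left (μ := μ) hW hWb hκ
  have hg₂ := integrable_setAverage_setAverage_abs_sub_right (μ := μ) hW hWb hκ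
  calc ∫ x, ∫ y, |W x y - stepAverage μ κ W x y| ∂μ ∂μ
      ≤ ∫ x, ∫ y, (⨍ u in κ ⁻¹' {κ x}, |W x y - W u y| ∂μ +
          ⨍ u in κ ⁻¹' {κ x}, ⨍ v in κ ⁻¹' {κ y}, |W u y - W u v| ∂μ ∂μ) ∂μ ∂μ := by
        refine integral_integral_mono_ae (integrable_abs_sub_stepAverage hW hWb hκ)
          (hg₁.add hg₂) ?_
        filter_upwards [ae_measure_fiber_ne_zero (κ := κ)] with x hx
        filter_upwards [ae_measure_fiber_ne_zero (κ := κ)] with y hy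
        exact abs_sub_stepAverage_le hW hWb hx hy (hκ (measurableSet_singleton _))
    _ ≤ η + η := (integral_integral_add hg₁ hg₂).trans_le
        (add_le_add (integral_integral_setAverage_abs_sub_left_le hW hWb hκ hη)
          (integral_integral_setAverage_setAverage_abs_sub_right_le hW hWsymm hWb hκ hη))
    _ = 2 * η := (two_mul η).symm

theorem exists_stepAverage_error_le_of_separated_card_le (hW : Measurable (uncurry W))
    (hWsymm : ∀ x y, W x y = W y x) (hWb : ∀ x y, |W x y| ≤ 1) {δ : ℝ} (hδ : 0 < δ) {N : ℝ}
    (hN : ∀ Z : Finset J, (Z : Set J).Pairwise (fun x y => δ ≤ neighborhoodDist μ W x y) →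
      (Z.card : ℝ) ≤ N) :
    ∃ (n : ℕ) (κ : J → Fin n), Measurable κ ∧ (n : ℝ) ≤ N ∧
      ∫ x, ∫ y, |W x y - stepAverage μ κ W x y| ∂μ ∂μ ≤ 4 * δ := by
  obtain ⟨Z, hZN, hZ⟩ := exists_finset_cover_of_separated_card_le neighborhoodDist_comm
    (fun x => (neighborhoodDist_self x).trans_lt hδ) hN
  set z : Fin Z.card → J := fun i => Z.equivFin.symm i
  obtain ⟨κ, hκ, hκz⟩ := exists_measurable_forall_mem
    (S := fun i => {x | neighborhoodDist μ W x (z i) < δ})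
    (fun i => measurableSet_lt ((measurable_neighborhoodDist hW).comp
      (measurable_id.prodMk measurable_const)) measurable_const)
    fun x => by
      obtain ⟨w, hw, hxw⟩ := hZ x
      exact ⟨Z.equivFin ⟨w, hw⟩, by simpa [z] using hxw⟩
  refine ⟨Z.card, κ, hκ, hZN, (integral_integral_abs_sub_stepAverage_le hW hWsymm hWb hκ
    (η := 2 * δ) fun x u hxu => ?_).trans_eq (by ring)⟩
  have hx : neighborhoodDist μ W x (z (κ x)) < δ := hκz x
  have hu : neighborhoodDist μ W u (z (κ x)) < δ := hxu ▸ hκz u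
  linarith [neighborhoodDist_comm (μ := μ) (W := W) u (z (κ x)),
    neighborhoodDist_triangle (μ := μ) hW hWb x u (z (κ x))]

end Kernel

/-- If the metric space `(J, r_W)` of a graphon `W` has finite packing
dimension `d` (there is a constant `Cp` such that every `ε`-separated set has
at most `Cp·ε^{−d}` points), then there is a constant `c` such that for every
`0 < ε < 1` the graphon has an ultra-strong regularity partition with error
`ε` into at most `ε^{−c·ε^{−d}}` classes. -/
theorem ultra_strong_partition_of_packing_dimension
    {J : Type*} [MeasurableSpace J] (μ : Measure J) [IsProbabilityMeasure μ]
    (W : J → J → ℝ)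
    (hWmeas : Measurable (fun p : J × J => W p.1 p.2))
    (hWsymm : ∀ x y, W x y = W y x)
    (hW0 : ∀ x y, 0 ≤ W x y) (hW1 : ∀ x y, W x y ≤ 1)
    (rW : J → J → ℝ)
    (hrW : ∀ x y, rW x y = ∫ z, |W x z - W y z| ∂μ)
    (d : ℝ) (hd : 0 < d)
    (Cp : ℝ)
    (hpack : ∀ ε : ℝ, 0 < ε → ε < 1 → ∀ Z : Finset J,
      (∀ x ∈ Z, ∀ y ∈ Z, x ≠ y → ε ≤ rW x y) →
      (Z.card : ℝ) ≤ Cp * ε ^ (-d)) :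
    ∃ c : ℝ, 0 < c ∧ ∀ ε : ℝ, 0 < ε → ε < 1 →
      ∃ (n : ℕ) (P : Fin n → Set J) (WP : J → J → ℝ),
        (n : ℝ) ≤ ε ^ (-(c * ε ^ (-d))) ∧
        (∀ i, MeasurableSet (P i)) ∧
        (∀ i j, i ≠ j → Disjoint (P i) (P j)) ∧
        (⋃ i, P i) = Set.univ ∧
        -- `WP` is the stepwise averaging of `W` over the classes of `P`
        (∀ i j, ∀ x ∈ P i, ∀ y ∈ P j, WP x y =
          (∫ u in P i, ∫ v in P j, W u v ∂μ ∂μ) /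
            ((μ (P i)).toReal * (μ (P j)).toReal)) ∧
        (∫ x, ∫ y, |W x y - WP x y| ∂μ ∂μ) ≤ ε := by
  have hWb : ∀ x y, |W x y| ≤ 1 := fun x y => abs_le.2 ⟨by linarith [hW0 x y], hW1 x y⟩
  obtain rfl : rW = neighborhoodDist μ W := funext fun x => funext (hrW x)
  obtain ⟨c, hc, hcount⟩ := exists_pos_rpow_bound (Cp * 4 ^ d) hd
  refine ⟨c, hc, fun ε hε₀ hε₁ => ?_⟩
  suffices ∃ (n : ℕ) (κ : J → Fin n), Measurable κ ∧ (n : ℝ) ≤ ε ^ (-(c * ε ^ (-d))) ∧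
      ∫ x, ∫ y, |W x y - stepAverage μ κ W x y| ∂μ ∂μ ≤ ε by
    obtain ⟨n, κ, hκ, hn, herr⟩ := this
    refine ⟨n, fun i => κ ⁻¹' {i}, stepAverage μ κ W, hn, fun i => hκ (measurableSet_singleton i),
      fun i j hij => (disjoint_singleton.2 hij).preimage κ, ?_,
      fun i j x hx y hy => stepAverage_eq_of_mem hx hy, herr⟩
    simp only [← preimage_iUnion, iUnion_of_singleton, preimage_univ]
  rcases lt_or_ge ε (1 / 2) with hε | hε
  · obtain ⟨n, κ, hκ, hn, herr⟩ := exists_stepAverage_error_le_of_separated_card_le hWmeas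
      hWsymm hWb (δ := ε / 4) (by positivity)
      fun Z hZ => hpack (ε / 4) (by positivity) (by linarith) Z fun x hx y hy hxy => hZ hx hy hxy
    refine ⟨n, κ, hκ, hn.trans (le_of_eq_of_le ?_ (hcount ε hε₀ hε)), herr.trans_eq (by ring)⟩
    rw [Real.div_rpow hε₀.le zero_le_four, Real.rpow_neg zero_le_four, div_inv_eq_mul]
    ring
  · refine ⟨1, fun _ => 0, measurable_const, ?_,
      (integral_integral_abs_sub_stepAverage_const_le_half hWmeas hW0 hW1 0).trans hε⟩
    rw [Nat.cast_one]
    exact Real.one_le_rpow_of_pos_of_le_one_of_nonpos hε₀ hε₁.le (neg_nonpos.2 (by positivity))
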